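/- Under the hypotheses of the Kalman residual identity (Σ psd, Σ_Y positive definite), the likelihood score evaluated at the Kalman posterior mean satisfies: −HᵀΣ_Y⁻¹(Hμ⁺ − y) = −Hᵀ(HΣHᵀ + Σ_Y)⁻¹(Hμ − y), where μ⁺ = μ + ΣHᵀ(HΣHᵀ + Σ_Y)⁻¹(y − Hμ). -/

import Mathlib

/-!
Write `A = HΣHᵀ + Σ_Y` for the innovation covariance and `r = Hμ − y`. The Kalman update gives
`Hμ⁺ − y = r − HΣHᵀA⁻¹r = (A − HΣHᵀ)A⁻¹r = Σ_Y A⁻¹r`, so applying `Σ_Y⁻¹` cancels `Σ_Y`.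
Both inverses exist because `A` and `Σ_Y` are positive definite.
-/

open Matrix

namespace Matrix

variable {m n α : Type*} [Fintype m] [Fintype n] [DecidableEq n] [CommRing α]

lemma sub_mulVec_nonsing_inv_add_mulVec {P R : Matrix n n α} (h : IsUnit (P + R).det)
    (r : n → α) : r - P *ᵥ ((P + R)⁻¹ *ᵥ r) = R *ᵥ ((P + R)⁻¹ *ᵥ r) := by
  calc r - P *ᵥ ((P + R)⁻¹ *ᵥ r) = (P + R) *ᵥ ((P + R)⁻¹ *ᵥ r) - P *ᵥ ((P + R)⁻¹ *ᵥ r) := by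
        rw [mulVec_mulVec r (P + R), mul_nonsing_inv _ h, one_mulVec]
    _ = R *ᵥ ((P + R)⁻¹ *ᵥ r) := by rw [add_mulVec, add_sub_cancel_left]

lemma kalman_update_residual (S : Matrix m m α) (R : Matrix n n α) (H : Matrix n m α)
    (h : IsUnit (H * S * Hᵀ + R).det) (μ : m → α) (y : n → α) :
    H *ᵥ (μ + (S * Hᵀ) *ᵥ ((H * S * Hᵀ + R)⁻¹ *ᵥ (y - H *ᵥ μ))) - y
      = R *ᵥ ((H * S * Hᵀ + R)⁻¹ *ᵥ (H *ᵥ μ - y)) := by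
  rw [← sub_mulVec_nonsing_inv_add_mulVec h, ← neg_sub (H *ᵥ μ) y, mulVec_add, mulVec_mulVec,
    ← Matrix.mul_assoc, mulVec_neg, mulVec_neg]
  abel

end Matrix

lemma Matrix.PosSemidef.mul_mul_transpose_add_posDef {m n : Type*} [Fintype m] [Fintype n]
    {S : Matrix m m ℝ} {R : Matrix n n ℝ} (hS : S.PosSemidef) (hR : R.PosDef)
    (H : Matrix n m ℝ) : (H * S * Hᵀ + R).PosDef :=
  .posSemidef_add (by simpa using hS.mul_mul_conjTranspose_same H) hR

/-- the likelihood score evaluated at the Kalman posterior mean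
`μ⁺ = μ + ΣHᵀ(HΣHᵀ + Σ_Y)⁻¹(y − Hμ)` satisfies
`−HᵀΣ_Y⁻¹(Hμ⁺ − y) = −Hᵀ(HΣHᵀ + Σ_Y)⁻¹(Hμ − y)`. -/
theorem score_at_kalman_mean {dx dy : ℕ}
    (S : Matrix (Fin dx) (Fin dx) ℝ) (hS : S.PosSemidef)
    (SY : Matrix (Fin dy) (Fin dy) ℝ) (hSY : SY.PosDef)
    (H : Matrix (Fin dy) (Fin dx) ℝ) (μ : Fin dx → ℝ) (y : Fin dy → ℝ)
    (μplus : Fin dx → ℝ)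
    (hμplus : μplus = μ + (S * Hᵀ) *ᵥ ((H * S * Hᵀ + SY)⁻¹ *ᵥ (y - H *ᵥ μ))) :
    -(Hᵀ *ᵥ (SY⁻¹ *ᵥ (H *ᵥ μplus - y)))
      = -(Hᵀ *ᵥ ((H * S * Hᵀ + SY)⁻¹ *ᵥ (H *ᵥ μ - y))) := by
  have hA : IsUnit (H * S * Hᵀ + SY).det :=
    (isUnit_iff_isUnit_det _).mp (hS.mul_mul_transpose_add_posDef hSY H).isUnit
  have hSYdet : IsUnit SY.det := (isUnit_iff_isUnit_det _).mp hSY.isUnit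
  rw [hμplus, kalman_update_residual S SY H hA, mulVec_mulVec _ SY⁻¹ SY, nonsing_inv_mul _ hSYdet,
    one_mulVec]
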